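/- arXiv:2503.18189 — 2 statements merged into one kernel-verified Lean document; each statement's English description precedes it below -/
import Mathlib

section
/- Let n ≥ 1, let A₁, A₂ ∈ GL(n, ℝ) be invertible matrices, let γ > 0, and let V_{b'}, V_{c'} ∈ Lyap₀(ℝⁿ) satisfy the inequalities of G₂: V_{b'}(x) ≥ γ V_{b'}(A₁ x), V_{b'}(x) ≥ γ V_{c'}(A₁ x), V_{c'}(x) ≥ γ V_{c'}(A₂ x) and V_{c'}(x) ≥ γ V_{b'}(A₂ x) for all x ∈ ℝⁿ. Then the functions V_b := V_{b'} ∘ A₁⁻¹ and V_c := V_{c'} ∘ A₂⁻¹ belong to Lyap₀(ℝⁿ) and satisfy the inequalities of G₁ with the same γ: V_b(x) ≥ γ V_b(A₁ x), V_b(x) ≥ γ V_c(A₂ x), V_c(x) ≥ γ V_c(A₂ x) and V_c(x) ≥ γ V_b(A₁ x) for all x ∈ ℝⁿ. -/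
open Filter

/-- A labeled digraph on node type `S` with alphabet `A`, given by its edge set,
is path-complete if every nonempty word is the label sequence of some path. -/
def PathComplete {S A : Type*} (E : Set (S × S × A)) : Prop :=
  ∀ w : List A, w ≠ [] → ∃ s : Fin (w.length + 1) → S,
    ∀ j : Fin w.length, (s j.castSucc, s j.succ, w.get j) ∈ E

/-- `G₁` (edge set `E₁`) simulates `G₂` (edge set `E₂`). -/
def Simulates {S₁ S₂ A : Type*} (E₁ : Set (S₁ × S₁ × A)) (E₂ : Set (S₂ × S₂ × A)) : Prop :=
  ∃ R : S₂ → S₁, ∀ a b i, (a, b, i) ∈ E₂ → (R a, R b, i) ∈ E₁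

/-- Simulation where the simulating graph has node set `V₁` inside ambient type `N₁`. -/
def SimulatesOn {N₁ N₂ A : Type*} (V₁ : Set N₁) (E₁ : Set (N₁ × N₁ × A))
    (E₂ : Set (N₂ × N₂ × A)) : Prop :=
  ∃ R : N₂ → N₁, (∀ s, R s ∈ V₁) ∧ ∀ a b i, (a, b, i) ∈ E₂ → (R a, R b, i) ∈ E₁

/-- Class K∞ function. -/
def IsKInfty (α : ℝ → ℝ) : Prop :=
  Continuous α ∧ StrictMono α ∧ α 0 = 0 ∧ Tendsto α atTop atTop

/-- Membership in `Lyap₀(ℝⁿ)`. -/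
def IsLyap {n : ℕ} (V : EuclideanSpace ℝ (Fin n) → ℝ) : Prop :=
  Continuous V ∧ V 0 = 0 ∧ (∀ x, x ≠ 0 → 0 < V x) ∧
  ∃ α₁ α₂ : ℝ → ℝ, IsKInfty α₁ ∧ IsKInfty α₂ ∧ ∀ x, α₁ ‖x‖ ≤ V x ∧ V x ≤ α₂ ‖x‖

/-- `(V_s)_{s}` together with `γ` is admissible for the graph with edge set `E`
and the switched maps `f`. -/
def Admissible {S A : Type*} {n : ℕ} (E : Set (S × S × A))
    (f : A → EuclideanSpace ℝ (Fin n) → EuclideanSpace ℝ (Fin n))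
    (V : S → EuclideanSpace ℝ (Fin n) → ℝ) (γ : ℝ) : Prop :=
  ∀ a b i, (a, b, i) ∈ E → ∀ x, V a x ≥ γ * V b (f i x)

/-- Edge set of the `T`-sum lift: nodes are multisets of size `T`. -/
def sumLiftEdgesT {S A : Type*} (E : Set (S × S × A)) (T : ℕ) :
    Set (Multiset S × Multiset S × A) :=
  { e | ∃ L : List (S × S), L.length = T ∧ (∀ p ∈ L, (p.1, p.2, e.2.2) ∈ E) ∧
      e.1 = ↑(L.map Prod.fst) ∧ e.2.1 = ↑(L.map Prod.snd) }

/-- Edge set of the sum lift `G^⊕` (union over all `T ≥ 1`). -/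
def sumLiftEdges {S A : Type*} (E : Set (S × S × A)) : Set (Multiset S × Multiset S × A) :=
  ⋃ T ∈ Set.Ici 1, sumLiftEdgesT E T

/-- Edge set of the `T`-forward composition lift `G^{∘T}`; a word `(j₁, …, j_T)` is
encoded as the list `[j₁, …, j_T]`.  For `T = 0` this is `G` itself (with empty words). -/
def fwdLiftEdges {S A : Type*} (E : Set (S × S × A)) :
    ℕ → Set ((S × List A) × (S × List A) × A)
  | 0 => { e | ∃ (a b : S) (i : A), (a, b, i) ∈ E ∧ e = ((a, []), (b, []), i) }
  | T + 1 => { e | ∃ (a b : S) (i : A) (l : List A) (jT : A), (a, b, i) ∈ E ∧ l.length = T ∧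
      e = ((a, l ++ [jT]), (b, i :: l), jT) }

/-- Edge set of the `T`-backward composition lift `G^{∘-T}`. -/
def bwdLiftEdges {S A : Type*} (E : Set (S × S × A)) :
    ℕ → Set ((S × List A) × (S × List A) × A)
  | 0 => { e | ∃ (a b : S) (i : A), (a, b, i) ∈ E ∧ e = ((a, []), (b, []), i) }
  | T + 1 => { e | ∃ (a b : S) (i : A) (l : List A) (jT : A), (a, b, i) ∈ E ∧ l.length = T ∧
      e = ((a, i :: l), (b, l ++ [jT]), jT) }

/-- The underlying undirected graph on node set `V` with labeled edge set `E` is connected. -/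
def ConnectedOn {N A : Type*} (V : Set N) (E : Set (N × N × A)) : Prop :=
  ∀ x ∈ V, ∀ y ∈ V,
    Relation.ReflTransGen (fun u v => ∃ i, (u, v, i) ∈ E ∨ (v, u, i) ∈ E) x y

/-- Transpose of a labeled digraph (reverse all edges). -/
def transposeEdges {S A : Type*} (E : Set (S × S × A)) : Set (S × S × A) :=
  { e | (e.2.1, e.1, e.2.2) ∈ E }

/-- Strong connectedness of a labeled digraph. -/
def StronglyConnectedEdges {S A : Type*} (E : Set (S × S × A)) : Prop :=
  ∀ x y : S, Relation.ReflTransGen (fun u v => ∃ i, (u, v, i) ∈ E) x y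

lemma kinfty_scale {α : ℝ → ℝ} (hα : IsKInfty α) {c : ℝ} (hc : 0 < c) :
    IsKInfty (fun r => α (c * r)) := by
  obtain ⟨hcont, hmono, h0, htend⟩ := hα
  refine ⟨hcont.comp (continuous_const.mul continuous_id), ?_, by simpa using h0, ?_⟩
  · exact fun a b h => hmono (by nlinarith)
  · exact htend.comp (Filter.tendsto_id.const_mul_atTop hc)

lemma isLyap_comp {n : ℕ} (hn : 1 ≤ n)
    (A : EuclideanSpace ℝ (Fin n) ≃L[ℝ] EuclideanSpace ℝ (Fin n))
    {V : EuclideanSpace ℝ (Fin n) → ℝ} (hV : IsLyap V) :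
    IsLyap (fun x => V (A x)) := by
  obtain ⟨hcont, h0, hpos, α₁, α₂, hα₁, hα₂, hbnd⟩ := hV
  set x₀ : EuclideanSpace ℝ (Fin n) := EuclideanSpace.single (⟨0, hn⟩ : Fin n) (1 : ℝ)
  have hx₀ : x₀ ≠ 0 := by
    intro h
    have : ‖x₀‖ = 1 := by simp [x₀, EuclideanSpace.norm_single]
    rw [h] at this; simp at this
  set CA := ‖(A : EuclideanSpace ℝ (Fin n) →L[ℝ] EuclideanSpace ℝ (Fin n))‖ with hCA
  set CS := ‖(A.symm : EuclideanSpace ℝ (Fin n) →L[ℝ] EuclideanSpace ℝ (Fin n))‖ with hCS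
  have hx₀n : 0 < ‖x₀‖ := norm_pos_iff.mpr hx₀
  have hCApos : 0 < CA := by
    have h1 : 0 < ‖A x₀‖ := norm_pos_iff.mpr (by simp [hx₀])
    have h2 : ‖A x₀‖ ≤ CA * ‖x₀‖ :=
      (A : EuclideanSpace ℝ (Fin n) →L[ℝ] EuclideanSpace ℝ (Fin n)).le_opNorm x₀
    nlinarith
  have hCSpos : 0 < CS := by
    have h1 : 0 < ‖A.symm x₀‖ := norm_pos_iff.mpr (by simp [hx₀])
    have h2 : ‖A.symm x₀‖ ≤ CS * ‖x₀‖ :=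
      (A.symm : EuclideanSpace ℝ (Fin n) →L[ℝ] EuclideanSpace ℝ (Fin n)).le_opNorm x₀
    nlinarith
  have hlow : ∀ x, CS⁻¹ * ‖x‖ ≤ ‖A x‖ := by
    intro x
    have : ‖x‖ ≤ CS * ‖A x‖ := by
      have := (A.symm : EuclideanSpace ℝ (Fin n) →L[ℝ] EuclideanSpace ℝ (Fin n)).le_opNorm (A x)
      simpa only [ContinuousLinearEquiv.coe_coe, ContinuousLinearEquiv.symm_apply_apply] using this
    rw [inv_mul_le_iff₀ hCSpos]
    linarith [this]
  have hup : ∀ x, ‖A x‖ ≤ CA * ‖x‖ := fun x =>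
    (A : EuclideanSpace ℝ (Fin n) →L[ℝ] EuclideanSpace ℝ (Fin n)).le_opNorm x
  refine ⟨hcont.comp A.continuous, by simp [h0], fun x hx => hpos _ (by simp [hx]), ?_⟩
  refine ⟨fun r => α₁ (CS⁻¹ * r), fun r => α₂ (CA * r),
    kinfty_scale hα₁ (inv_pos.mpr hCSpos), kinfty_scale hα₂ hCApos, fun x => ?_⟩
  constructor
  · exact le_trans (hα₁.2.1.monotone (hlow x)) (hbnd (A x)).1
  · exact le_trans (hbnd (A x)).2 (hα₂.2.1.monotone (hup x))

/-- If `V_{b'}, V_{c'} ∈ Lyap₀(ℝⁿ)` satisfy the Lyapunov inequalities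
of `G₂` for invertible linear maps `A₁, A₂` and some `γ > 0`, then `V_b := V_{b'} ∘ A₁⁻¹`
and `V_c := V_{c'} ∘ A₂⁻¹` are in `Lyap₀(ℝⁿ)` and satisfy the inequalities of `G₁`
with the same `γ`. -/
theorem g2_implies_g1_backward {n : ℕ} (hn : 1 ≤ n)
    (A₁ A₂ : EuclideanSpace ℝ (Fin n) ≃L[ℝ] EuclideanSpace ℝ (Fin n))
    (γ : ℝ) (hγ : 0 < γ)
    (Vb' Vc' : EuclideanSpace ℝ (Fin n) → ℝ) (hVb' : IsLyap Vb') (hVc' : IsLyap Vc')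
    (h1 : ∀ x, Vb' x ≥ γ * Vb' (A₁ x)) (h2 : ∀ x, Vb' x ≥ γ * Vc' (A₁ x))
    (h3 : ∀ x, Vc' x ≥ γ * Vc' (A₂ x)) (h4 : ∀ x, Vc' x ≥ γ * Vb' (A₂ x)) :
    IsLyap (fun x => Vb' (A₁.symm x)) ∧ IsLyap (fun x => Vc' (A₂.symm x)) ∧
    (∀ x, Vb' (A₁.symm x) ≥ γ * Vb' (A₁.symm (A₁ x))) ∧
    (∀ x, Vb' (A₁.symm x) ≥ γ * Vc' (A₂.symm (A₂ x))) ∧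
    (∀ x, Vc' (A₂.symm x) ≥ γ * Vc' (A₂.symm (A₂ x))) ∧
    (∀ x, Vc' (A₂.symm x) ≥ γ * Vb' (A₁.symm (A₁ x))) := by
  refine ⟨isLyap_comp hn A₁.symm hVb', isLyap_comp hn A₂.symm hVc', ?_, ?_, ?_, ?_⟩
  · intro x; simpa using h1 (A₁.symm x)
  · intro x; simpa using h2 (A₁.symm x)
  · intro x; simpa using h3 (A₂.symm x)
  · intro x; simpa using h4 (A₂.symm x)
end

section
/- For every T ≥ 1, the T-sum lift G₁^{⊕T} of G₁ does not simulate G₂; consequently, the sum lift G₁^⊕ does not simulate G₂. -/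
open Filter

/-- Graph `G₁` from Example 3.9: nodes `b = 0`, `c = 1`; labels `1 = 0`, `2 = 1`. -/
def G1edges : Set (Fin 2 × Fin 2 × Fin 2) :=
  {(0, 0, 0), (0, 1, 1), (1, 1, 1), (1, 0, 0)}

/-- Graph `G₂` from Example 3.9: nodes `b' = 0`, `c' = 1`; labels `1 = 0`, `2 = 1`. -/
def G2edges : Set (Fin 2 × Fin 2 × Fin 2) :=
  {(0, 0, 0), (0, 1, 0), (1, 1, 1), (1, 0, 1)}


lemma g1_snd {a b i : Fin 2} (h : (a, b, i) ∈ G1edges) : b = i := by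
  simp only [G1edges, Set.mem_insert_iff, Set.mem_singleton_iff, Prod.mk.injEq] at h
  rcases h with ⟨_, rfl, rfl⟩ | ⟨_, rfl, rfl⟩ | ⟨_, rfl, rfl⟩ | ⟨_, rfl, rfl⟩ <;> rfl

lemma lift_target {M N : Multiset (Fin 2)} {i : Fin 2} {T : ℕ}
    (h : (M, N, i) ∈ sumLiftEdgesT G1edges T) : N = Multiset.replicate T i := by
  obtain ⟨L, hlen, hmem, _, hN⟩ := h
  have hL : L.map Prod.snd = List.replicate T i := by
    apply List.eq_replicate_iff.mpr
    refine ⟨by simp [hlen], ?_⟩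
    intro b hb
    obtain ⟨p, hp, rfl⟩ := List.mem_map.mp hb
    exact g1_snd (hmem p hp)
  simp only at hN
  rw [hN, hL, Multiset.coe_replicate]

lemma rep_ne {T T' : ℕ} (hT : 1 ≤ T) :
    (Multiset.replicate T (0 : Fin 2)) ≠ Multiset.replicate T' 1 := by
  intro h
  have := congrArg (Multiset.count 0) h
  simp [Multiset.count_replicate] at this
  omega

/-- Example: no `T`-sum-lift simulation for Figure 1.  For every
`T ≥ 1` the `T`-sum lift `G₁^{⊕T}` does not simulate `G₂`; consequently the full sum
lift `G₁^⊕` does not simulate `G₂`. -/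
theorem sum_lift_never_simulates :
    (∀ T : ℕ, 1 ≤ T →
      ¬ SimulatesOn {M : Multiset (Fin 2) | Multiset.card M = T}
          (sumLiftEdgesT G1edges T) G2edges) ∧
    ¬ SimulatesOn {M : Multiset (Fin 2) | M ≠ 0} (sumLiftEdges G1edges) G2edges := by
  have e00 : ((0:Fin 2), (0:Fin 2), (0:Fin 2)) ∈ G2edges := by left; rfl
  have e01 : ((0:Fin 2), (1:Fin 2), (0:Fin 2)) ∈ G2edges := by right; left; rfl
  have e11 : ((1:Fin 2), (1:Fin 2), (1:Fin 2)) ∈ G2edges := by right; right; left; rfl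
  constructor
  · intro T hT ⟨R, _, hsim⟩
    have h01 := lift_target (hsim 0 1 0 e01)
    have h11 := lift_target (hsim 1 1 1 e11)
    exact rep_ne hT (h01.symm.trans h11)
  · rintro ⟨R, _, hsim⟩
    have h01 := hsim 0 1 0 e01
    have h11 := hsim 1 1 1 e11
    simp only [sumLiftEdges, Set.mem_iUnion, Set.mem_Ici] at h01 h11
    obtain ⟨T, hT, h01⟩ := h01
    obtain ⟨T', hT', h11⟩ := h11
    exact rep_ne hT ((lift_target h01).symm.trans (lift_target h11))
end
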